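/- (Proposition 1, posterior case.) Let S and L be nonempty finite types, U : S → L → ℝ, x : S → L, and w : S → L → ℝ with w(s)(ℓ) > 0 for all s, ℓ. Define f_post(β) = ∑_{s ∈ S} [U(s)(x(s)) − (∑_{ℓ} w(s)(ℓ)·U(s)(ℓ)·exp(β·U(s)(ℓ))) / (∑_{ℓ} w(s)(ℓ)·exp(β·U(s)(ℓ)))]. Then for every β ∈ ℝ, the derivative of f_post at β equals −∑_{s ∈ S} [∑_{ℓ} p_{s,β}(ℓ)·U(s)(ℓ)² − (∑_{ℓ} p_{s,β}(ℓ)·U(s)(ℓ))²], where p_{s,β}(ℓ) = w(s)(ℓ)·exp(β·U(s)(ℓ)) / ∑_{ℓ'} w(s)(ℓ')·exp(β·U(s)(ℓ')); i.e., f_post'(β) is minus the sum over sites of the conditional variances of U_s(X_s) given (X_{∂s}, I_s). -/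

import Mathlib

/-!
The score at a site is `U(x_s)` minus the mean of `U_s` under the tilted law
`p_{s,β}(ℓ) ∝ w(s)(ℓ)·exp(β·U(s)(ℓ))`, i.e. the quotient `Z'/Z` of the partition function
`Z(β) = ∑_ℓ w(s)(ℓ)·exp(β·U(s)(ℓ))` and its derivative. Differentiating the quotient gives
`Z''/Z - (Z'/Z)²`, which is the second moment minus the squared mean of `U_s` under `p_{s,β}`.
-/

open Real Finset

section TiltedMean

variable {ι : Type*} [Fintype ι]

theorem hasDerivAt_sum_mul_exp_mul (c u : ι → ℝ) (β : ℝ) :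
    HasDerivAt (fun β => ∑ i, c i * exp (β * u i)) (∑ i, c i * u i * exp (β * u i)) β :=
  HasDerivAt.fun_sum fun i _ =>
    ((hasDerivAt_mul_const (u i)).exp.const_mul (c i)).congr_deriv (by ring)

theorem hasDerivAt_tiltedMean (w u : ι → ℝ) (β : ℝ)
    (hZ : ∑ i, w i * exp (β * u i) ≠ 0) :
    HasDerivAt (fun β => (∑ i, w i * u i * exp (β * u i)) / ∑ i, w i * exp (β * u i))
      ((∑ i, (w i * exp (β * u i) / ∑ j, w j * exp (β * u j)) * u i ^ 2)
        - (∑ i, (w i * exp (β * u i) / ∑ j, w j * exp (β * u j)) * u i) ^ 2) β := by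
  have hquot := (hasDerivAt_sum_mul_exp_mul (fun i => w i * u i) u β).div
    (hasDerivAt_sum_mul_exp_mul w u β) hZ
  refine hquot.congr_deriv ?_
  have second_moment : ∑ i, (w i * exp (β * u i) / ∑ j, w j * exp (β * u j)) * u i ^ 2
      = (∑ i, w i * u i * u i * exp (β * u i)) / ∑ j, w j * exp (β * u j) := by
    rw [sum_div]; exact sum_congr rfl fun i _ => by ring
  have mean : ∑ i, (w i * exp (β * u i) / ∑ j, w j * exp (β * u j)) * u i
      = (∑ i, w i * u i * exp (β * u i)) / ∑ j, w j * exp (β * u j) := by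
    rw [sum_div]; exact sum_congr rfl fun i _ => by ring
  rw [second_moment, mean]
  -- treat the three sums as atoms, so that `field_simp` does not rewrite inside `exp`
  generalize ∑ i, w i * u i * u i * exp (β * u i) = M₂ at *
  generalize ∑ i, w i * u i * exp (β * u i) = M₁ at *
  generalize ∑ i, w i * exp (β * u i) = Z at *
  field_simp

end TiltedMean

theorem fpost_hasDerivAt_neg_sum_variances_general
    {S L : Type*} [Fintype S] [Fintype L] [Nonempty L]
    (U : S → L → ℝ) (x : S → L) (w : S → L → ℝ) (hw : ∀ s ℓ, 0 < w s ℓ) (β : ℝ) :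
    HasDerivAt (fun β : ℝ => ∑ s, (U s (x s) -
        (∑ ℓ, w s ℓ * U s ℓ * Real.exp (β * U s ℓ)) /
          (∑ ℓ, w s ℓ * Real.exp (β * U s ℓ))))
      (-∑ s, ((∑ ℓ, (w s ℓ * Real.exp (β * U s ℓ) /
            ∑ ℓ', w s ℓ' * Real.exp (β * U s ℓ')) * (U s ℓ) ^ 2)
        - (∑ ℓ, (w s ℓ * Real.exp (β * U s ℓ) /
            ∑ ℓ', w s ℓ' * Real.exp (β * U s ℓ')) * U s ℓ) ^ 2))
      β := by
  rw [← sum_neg_distrib]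
  refine HasDerivAt.fun_sum fun s _ => ?_
  have hZ : 0 < ∑ ℓ, w s ℓ * exp (β * U s ℓ) :=
    sum_pos (fun ℓ _ => mul_pos (hw s ℓ) (exp_pos _)) univ_nonempty
  exact (hasDerivAt_tiltedMean (w s) (U s) β hZ.ne').const_sub (U s (x s))

/-- Proposition 1, posterior case: the derivative of the posterior pseudolikelihood
score function is minus the sum over sites of the conditional variances. -/
theorem fpost_hasDerivAt_neg_sum_variances
    {S L : Type*} [Fintype S] [Nonempty S] [Fintype L] [Nonempty L]
    (U : S → L → ℝ) (x : S → L) (w : S → L → ℝ) (hw : ∀ s ℓ, 0 < w s ℓ) (β : ℝ) :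
    HasDerivAt (fun β : ℝ => ∑ s, (U s (x s) -
        (∑ ℓ, w s ℓ * U s ℓ * Real.exp (β * U s ℓ)) /
          (∑ ℓ, w s ℓ * Real.exp (β * U s ℓ))))
      (-∑ s, ((∑ ℓ, (w s ℓ * Real.exp (β * U s ℓ) /
            ∑ ℓ', w s ℓ' * Real.exp (β * U s ℓ')) * (U s ℓ) ^ 2)
        - (∑ ℓ, (w s ℓ * Real.exp (β * U s ℓ) /
            ∑ ℓ', w s ℓ' * Real.exp (β * U s ℓ')) * U s ℓ) ^ 2))
      β :=
  fpost_hasDerivAt_neg_sum_variances_general U x w hw β
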